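/- The poset Q⁰_λ ordered by ≤⁰ is (<λ⁺)-complete as a forcing notion: every ≤⁰-increasing sequence of length ≤ λ of elements of Q⁰_λ has a ≤⁰-upper bound, and |Q⁰_λ| = 2^(2^(<λ)). -/

import Mathlib

open Set

noncomputable section

def IsUltrafilterOn {α : Type*} (Z : Set α) (d : Set (Set α)) : Prop :=
  (∀ A ∈ d, A ⊆ Z) ∧ Z ∈ d ∧ ∅ ∉ d ∧
  (∀ A B : Set α, A ∈ d → A ⊆ B → B ⊆ Z → B ∈ d) ∧
  (∀ A B : Set α, A ∈ d → B ∈ d → A ∩ B ∈ d) ∧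
  (∀ A : Set α, A ⊆ Z → (A ∈ d ∨ Z \ A ∈ d))

def IsNonprincipalOn {α : Type*} (Z : Set α) (d : Set (Set α)) : Prop :=
  IsUltrafilterOn Z d ∧ ∀ x : α, {x} ∉ d

def IsClubIn (C : Set Ordinal) (lam : Ordinal) : Prop :=
  C ⊆ Iio lam ∧ (∀ β < lam, ∃ δ ∈ C, β < δ) ∧
  (∀ β < lam, β ≠ 0 → sSup (C ∩ Iio β) = β → β ∈ C)

def nextIn (C : Set Ordinal) (δ : Ordinal) : Ordinal := sInf (C \ Iic δ)

/-- An element of `Q⁰_λ`, normalized so that the ultrafilter assignment vanishes off the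
club `C` (so that elements of the type correspond exactly to the tuples of the paper). -/
structure QZero (lam : Ordinal) where
  C : Set Ordinal
  d : Ordinal → Set (Set Ordinal)
  club : IsClubIn C lam
  limit : ∀ δ ∈ C, Order.IsSuccLimit δ
  ultra : ∀ δ ∈ C, IsNonprincipalOn (Ico δ (nextIn C δ)) (d δ)
  d_junk : ∀ δ, δ ∉ C → d δ = ∅

def QZero.Z {lam : Ordinal} (p : QZero lam) (δ : Ordinal) : Set Ordinal :=
  Ico δ (nextIn p.C δ)

def fil {lam : Ordinal} (p : QZero lam) : Set (Set Ordinal) :=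
  {A | A ⊆ Iio lam ∧ ∃ ε < lam, ∀ δ ∈ p.C, ε ≤ δ → A ∩ p.Z δ ∈ p.d δ}

def le0 {lam : Ordinal} (p q : QZero lam) : Prop := fil p ⊆ fil q

/-!
The heart of the completeness is a uniformity statement: if `fil p ⊆ fil q`, then one threshold
`ε < λ` serves for all sets that are large in every block of `p` at once. Given a chain
`p ξ` (`ξ < δ ≤ λ`), let `C` be the club of limit ordinals closed under the block-successor maps
of all the `p ξ` and under these thresholds. A point `α ∈ C` lies in the club of every `p ξ`
with `ξ < α`, and by uniformity the sets that are large in every block of some `p ζ`,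
`ζ < min δ α`, are all large in the block at `α` of the later members of the chain. So on the
block of `C` at `α` they have the infinite finite-intersection property and extend to a
nonprincipal ultrafilter; these ultrafilters form the upper bound.

For the size: `2 ^< λ = λ`, so each ultrafilter is one of `2 ^ λ` families of subsets of a
bounded subset of `λ`, and an element of `Q⁰_λ` is determined by `λ` of them; conversely one
may choose one of two ultrafilters independently on each of the `λ` blocks of a fixed club.
-/

section Ultrafilters

open Filter

namespace IsUltrafilterOn

variable {α : Type*} {Z A B : Set α} {d : Set (Set α)}

theorem subset_of_mem (h : IsUltrafilterOn Z d) (hA : A ∈ d) : A ⊆ Z := h.1 A hA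

theorem self_mem (h : IsUltrafilterOn Z d) : Z ∈ d := h.2.1

theorem empty_notMem (h : IsUltrafilterOn Z d) : ∅ ∉ d := h.2.2.1

theorem inter_mem (h : IsUltrafilterOn Z d) (hA : A ∈ d) (hB : B ∈ d) : A ∩ B ∈ d :=
  h.2.2.2.2.1 A B hA hB

theorem inter_mem_of_subset (h : IsUltrafilterOn Z d) (hA : A ∈ d) (hAB : A ⊆ B) : B ∩ Z ∈ d :=
  h.2.2.2.1 A _ hA (subset_inter hAB (h.subset_of_mem hA)) inter_subset_right

def toFilter (h : IsUltrafilterOn Z d) : Filter α where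
  sets := {A | A ∩ Z ∈ d}
  univ_sets := by
    show univ ∩ Z ∈ d
    rw [univ_inter]
    exact h.self_mem
  sets_of_superset hA hAB := h.inter_mem_of_subset hA (inter_subset_left.trans hAB)
  inter_sets {A B} hA hB := by
    show A ∩ B ∩ Z ∈ d
    rw [inter_inter_distrib_right]
    exact h.inter_mem hA hB

theorem sInter_inter_mem (h : IsUltrafilterOn Z d) {T : Set (Set α)} (hT : T.Finite)
    (hmem : ∀ B ∈ T, B ∩ Z ∈ d) : ⋂₀ T ∩ Z ∈ d :=
  (sInter_mem (f := h.toFilter) hT).2 hmem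

end IsUltrafilterOn

namespace IsNonprincipalOn

variable {α : Type*} {Z A : Set α} {d : Set (Set α)}

theorem toFilter_le_cofinite (h : IsNonprincipalOn Z d) : h.1.toFilter ≤ cofinite := by
  refine le_cofinite_iff_compl_singleton_mem.2 fun x => ?_
  show {x}ᶜ ∩ Z ∈ d
  by_cases hx : x ∈ Z
  · rw [inter_comm, ← sdiff_eq]
    exact (h.1.2.2.2.2.2 {x} (singleton_subset_iff.2 hx)).resolve_left (h.2 x)
  · rw [inter_eq_right.2 (subset_compl_singleton_iff.2 hx)]
    exact h.1.self_mem

theorem infinite_of_mem (h : IsNonprincipalOn Z d) (hA : A ∈ d) : A.Infinite := by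
  have : NeBot h.1.toFilter :=
    ⟨mt empty_mem_iff_bot.2 fun h0 => h.1.empty_notMem (empty_inter Z ▸ h0)⟩
  have hAF : A ∈ h.1.toFilter := show A ∩ Z ∈ d by rwa [inter_eq_left.2 (h.1.subset_of_mem hA)]
  exact frequently_cofinite_mem_iff_infinite.1
    ((Eventually.frequently hAF).filter_mono h.toFilter_le_cofinite)

end IsNonprincipalOn

section Existence

variable {α : Type*} {Z A : Set α}

theorem isNonprincipalOn_of_ultrafilter (U : Ultrafilter α) (hZ : Z ∈ U)
    (hU : (U : Filter α) ≤ cofinite) :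
    IsNonprincipalOn Z {A | A ⊆ Z ∧ A ∈ U} := by
  refine ⟨⟨fun A hA => hA.1, ⟨subset_rfl, hZ⟩, fun h => U.empty_notMem h.2,
    fun A B hA hAB hBZ => ⟨hBZ, mem_of_superset hA.2 hAB⟩,
    fun A B hA hB => ⟨inter_subset_left.trans hA.1, inter_mem hA.2 hB.2⟩, fun A hAZ => ?_⟩,
    fun x hx => ?_⟩
  · rcases U.mem_or_compl_mem A with hA | hA
    · exact Or.inl ⟨hAZ, hA⟩
    · exact Or.inr ⟨sdiff_subset, by rw [sdiff_eq]; exact inter_mem hZ hA⟩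
  · have := inter_mem hx.2 (hU (finite_singleton x).compl_mem_cofinite)
    simp at this

theorem exists_isNonprincipalOn_of_finite_inter {G : Set (Set α)}
    (hG : ∀ T ⊆ G, T.Finite → (Z ∩ ⋂₀ T).Infinite) :
    ∃ d, IsNonprincipalOn Z d ∧ ∀ A ∈ G, A ∩ Z ∈ d := by
  have hinf : ∀ s ∈ generate G ⊓ 𝓟 Z, s.Infinite := fun s hs => by
    obtain ⟨T, hTG, hT, hTs⟩ := mem_generate_iff.1 (mem_inf_principal.1 hs)
    exact (hG T hTG hT).mono fun x hx => hTs hx.2 hx.1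
  have : NeBot (cofinite ⊓ (generate G ⊓ 𝓟 Z)) := inf_neBot_iff.2 fun s hs t ht =>
    ((hinf t ht).sdiff (mem_cofinite.1 hs)).nonempty.mono fun x hx => ⟨not_not.1 hx.2, hx.1⟩
  have hU := Ultrafilter.of_le (cofinite ⊓ (generate G ⊓ 𝓟 Z))
  refine ⟨_, isNonprincipalOn_of_ultrafilter _ (hU.trans inf_le_right (mem_inf_of_right
    (mem_principal_self Z))) (hU.trans inf_le_left), fun A hA => ⟨inter_subset_right, ?_⟩⟩
  exact hU.trans inf_le_right (inter_mem_inf (mem_generate_of_mem hA) (mem_principal_self Z))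

theorem exists_isNonprincipalOn_mem (hAZ : A ⊆ Z) (hA : A.Infinite) :
    ∃ d, IsNonprincipalOn Z d ∧ A ∈ d := by
  have := hA.cofinite_inf_principal_neBot
  have hU := Ultrafilter.of_le (cofinite ⊓ 𝓟 A)
  exact ⟨_, isNonprincipalOn_of_ultrafilter _ (hU.trans inf_le_right (mem_principal.2 hAZ))
    (hU.trans inf_le_left), hAZ, hU.trans inf_le_right (mem_principal_self A)⟩

theorem Set.Infinite.exists_infinite_sdiff (hZ : Z.Infinite) :
    ∃ A ⊆ Z, A.Infinite ∧ (Z \ A).Infinite := by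
  let e := hZ.natEmbedding
  have he : ∀ m n, (e m : α) = e n → m = n := fun m n h => e.injective (Subtype.ext h)
  refine ⟨range fun n => (e (2 * n) : α), range_subset_iff.2 fun n => (e _).2,
    infinite_range_of_injective fun m n h => by simpa using he _ _ h, ?_⟩
  refine (infinite_range_of_injective (f := fun n => (e (2 * n + 1) : α))
    fun m n h => by simpa using he _ _ h).mono (range_subset_iff.2 fun n => ⟨(e _).2, ?_⟩)
  rintro ⟨m, hm⟩
  have := he _ _ hm
  omega

theorem exists_ne_isNonprincipalOn (hZ : Z.Infinite) :
    ∃ d₁ d₂, IsNonprincipalOn Z d₁ ∧ IsNonprincipalOn Z d₂ ∧ d₁ ≠ d₂ := by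
  obtain ⟨A, hAZ, hA, hZA⟩ := hZ.exists_infinite_sdiff
  obtain ⟨d₁, hd₁, hAd₁⟩ := exists_isNonprincipalOn_mem hAZ hA
  obtain ⟨d₂, hd₂, hAd₂⟩ := exists_isNonprincipalOn_mem sdiff_subset hZA
  refine ⟨d₁, d₂, hd₁, hd₂, fun h => hd₁.1.empty_notMem ?_⟩
  rw [← inter_sdiff_self A Z]
  exact hd₁.1.inter_mem hAd₁ (h ▸ hAd₂)

end Existence

end Ultrafilters

open Cardinal

theorem nextIn_le {C : Set Ordinal} {β c : Ordinal} (hc : c ∈ C) (hβc : β < c) :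
    nextIn C β ≤ c :=
  csInf_le' ⟨hc, not_le.2 hβc⟩

namespace IsClubIn

variable {C : Set Ordinal} {lam β γ : Ordinal}

theorem nonempty_sdiff_Iic (hC : IsClubIn C lam) (hβ : β < lam) : (C \ Iic β).Nonempty :=
  let ⟨δ, hδ, hβδ⟩ := hC.2.1 β hβ
  ⟨δ, hδ, not_le.2 hβδ⟩

theorem nextIn_mem (hC : IsClubIn C lam) (hβ : β < lam) : nextIn C β ∈ C :=
  (csInf_mem (hC.nonempty_sdiff_Iic hβ)).1

theorem lt_nextIn (hC : IsClubIn C lam) (hβ : β < lam) : β < nextIn C β :=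
  not_le.1 (csInf_mem (hC.nonempty_sdiff_Iic hβ)).2

theorem nextIn_lt (hC : IsClubIn C lam) (hβ : β < lam) : nextIn C β < lam :=
  hC.1 (hC.nextIn_mem hβ)

theorem mem_of_forall_nextIn_lt (hC : IsClubIn C lam) (hγ : γ < lam) (hγ0 : γ ≠ 0)
    (h : ∀ β < γ, nextIn C β < γ) : γ ∈ C := by
  refine hC.2.2 γ hγ hγ0 (le_antisymm (csSup_le' fun x hx => hx.2.le) (le_of_forall_lt ?_))
  intro β hβ
  have hβlam := hβ.trans hγ
  exact (hC.lt_nextIn hβlam).trans_le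
    (le_csSup ⟨γ, fun x hx => hx.2.le⟩ ⟨hC.nextIn_mem hβlam, h β hβ⟩)

end IsClubIn

def closurePoints (h : Ordinal → Ordinal → Ordinal) (lam : Ordinal) : Set Ordinal :=
  {α | α < lam ∧ Order.IsSuccLimit α ∧ ∀ ξ < α, ∀ ζ < α, h ξ ζ < α}

section ClosurePoints

variable {κ : Cardinal.{0}} {h : Ordinal.{0} → Ordinal.{0} → Ordinal.{0}}

theorem iSup_Iio_prod_lt (hκ : κ.IsRegular) (hh : ∀ ξ < κ.ord, ∀ ζ < κ.ord, h ξ ζ < κ.ord)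
    {γ : Ordinal} (hγ : γ < κ.ord) : ⨆ x : Iio γ × Iio γ, h x.1 x.2 < κ.ord := by
  have hcard : γ.card < κ := lt_ord.1 hγ
  refine Ordinal.lift_iSup_lt_of_lt_cof ?_ fun x => hh _ (x.1.2.trans hγ) _ (x.2.2.trans hγ)
  rw [← Ordinal.lift_cof, hκ.cof_ord, mk_prod, Cardinal.mk_Iio_ordinal]
  simpa only [lift_id, lift_lift, ← lift_mul, lift_lt] using mul_lt_of_lt hκ.aleph0_le hcard hcard

theorem exists_mem_closurePoints_gt (hκ : κ.IsRegular) (hunc : ℵ₀ < κ)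
    (hh : ∀ ξ < κ.ord, ∀ ζ < κ.ord, h ξ ζ < κ.ord) {β : Ordinal} (hβ : β < κ.ord) :
    ∃ α ∈ closurePoints h κ.ord, β < α := by
  have hlim := isSuccLimit_ord hκ.aleph0_le
  set F : Ordinal → Ordinal := fun γ => Order.succ (max γ (⨆ x : Iio γ × Iio γ, h x.1 x.2))
  have hF : ∀ γ < κ.ord, F γ < κ.ord := fun γ hγ =>
    hlim.succ_lt (max_lt hγ (iSup_Iio_prod_lt hκ hh hγ))
  set a := Order.succ β
  set α := Ordinal.nfp F a
  have hα : α < κ.ord := Ordinal.nfp_lt_ord (by rwa [hκ.cof_ord]) hF (hlim.succ_lt hβ)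
  have hbelow : ∀ γ < α, ∃ c, γ < c ∧ F c ≤ α := fun γ hγ => by
    obtain ⟨n, hn⟩ := Ordinal.lt_nfp_iff.1 hγ
    exact ⟨_, hn, (Function.iterate_succ_apply' F n a).symm.trans_le (Ordinal.iterate_le_nfp F a _)⟩
  have hβα : β < α := (Order.lt_succ β).trans_le (Ordinal.le_nfp F a)
  refine ⟨α, ⟨hα, ?_, fun ξ hξ ζ hζ => ?_⟩, hβα⟩
  · refine Ordinal.isSuccLimit_iff.2 ⟨(pos_of_gt hβα).ne',
      Order.isSuccPrelimit_of_succ_lt fun γ hγ => ?_⟩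
    obtain ⟨c, hγc, hc⟩ := hbelow γ hγ
    exact (Order.succ_le_of_lt hγc).trans_lt ((Order.lt_succ_of_le (le_max_left _ _)).trans_le hc)
  · obtain ⟨c, hc, hFc⟩ := hbelow _ (max_lt hξ hζ)
    refine lt_of_le_of_lt ?_ ((Order.lt_succ_of_le (le_max_right _ _)).trans_le hFc)
    exact Ordinal.le_iSup (f := fun x : Iio c × Iio c => h x.1 x.2)
      (⟨⟨ξ, (le_max_left _ _).trans_lt hc⟩, ⟨ζ, (le_max_right _ _).trans_lt hc⟩⟩)

theorem isClubIn_closurePoints (hκ : κ.IsRegular) (hunc : ℵ₀ < κ)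
    (hh : ∀ ξ < κ.ord, ∀ ζ < κ.ord, h ξ ζ < κ.ord) :
    IsClubIn (closurePoints h κ.ord) κ.ord := by
  refine ⟨fun α hα => hα.1, fun β hβ => exists_mem_closurePoints_gt hκ hunc hh hβ,
    fun β hβ hβ0 hsup => ?_⟩
  have hbetween : ∀ γ < β, ∃ α ∈ closurePoints h κ.ord, γ < α ∧ α < β := fun γ hγ => by
    obtain ⟨α, ⟨hα, hαβ⟩, hγα⟩ := exists_lt_of_lt_csSup' (hsup.symm ▸ hγ)
    exact ⟨α, hα, hγα, hαβ⟩
  refine ⟨hβ, Ordinal.isSuccLimit_iff.2 ⟨hβ0, Order.isSuccPrelimit_of_succ_lt fun γ hγ => ?_⟩,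
    fun ξ hξ ζ hζ => ?_⟩
  · obtain ⟨α, hα, hγα, hαβ⟩ := hbetween γ hγ
    exact (hα.2.1.succ_lt hγα).trans hαβ
  · obtain ⟨α, hα, hγα, hαβ⟩ := hbetween _ (max_lt hξ hζ)
    exact (hα.2.2 ξ ((le_max_left _ _).trans_lt hγα) ζ ((le_max_right _ _).trans_lt hγα)).trans hαβ

end ClosurePoints

namespace QZero

variable {lam α ε ε' η : Ordinal} {A : Set Ordinal}

def LargeFrom (p : QZero lam) (ε : Ordinal) (A : Set Ordinal) : Prop :=
  ∀ γ ∈ p.C, ε ≤ γ → A ∩ p.Z γ ∈ p.d γ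

theorem LargeFrom.mono {p : QZero lam} (hA : p.LargeFrom ε A) (h : ε ≤ ε') : p.LargeFrom ε' A :=
  fun γ hγ hεγ => hA γ hγ (h.trans hεγ)

theorem Z_subset_Iio (p : QZero lam) (hη : η ∈ p.C) : p.Z η ⊆ Iio lam :=
  fun _ hx => hx.2.trans (p.club.nextIn_lt (p.club.1 hη))

theorem Z_mem_d (p : QZero lam) (hη : η ∈ p.C) : p.Z η ∈ p.d η :=
  (p.ultra η hη).1.self_mem

/-- Below a point `α` of the club every block lies inside `Iio α`. -/
theorem largeFrom_zero_union_Iio {p : QZero lam} (hα : α ∈ p.C) (hA : p.LargeFrom α A) :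
    p.LargeFrom 0 (A ∪ Iio α) := by
  intro γ hγ _
  rcases lt_or_ge γ α with hγα | hαγ
  · exact (p.ultra γ hγ).1.inter_mem_of_subset (p.Z_mem_d hγ)
      fun x hx => Or.inr (hx.2.trans_le (nextIn_le hα hγα))
  · exact (p.ultra γ hγ).1.inter_mem_of_subset (hA γ hγ hαγ)
      (inter_subset_left.trans subset_union_left)

theorem nextIn_le_of_meets {p q : QZero lam} {β : Ordinal} (hβ : β ∈ q.C)
    (h : (p.Z η ∩ q.Z β).Nonempty) : nextIn p.C η ≤ nextIn p.C (nextIn q.C β) := by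
  obtain ⟨x, hxp, hxq⟩ := h
  have hn := q.club.nextIn_lt (q.club.1 hβ)
  exact nextIn_le (p.club.nextIn_mem hn) (hxp.1.trans_lt (hxq.2.trans (p.club.lt_nextIn hn)))

open Classical in
def ofClub (C : Set Ordinal) (d : Ordinal → Set (Set Ordinal)) (hC : IsClubIn C lam)
    (hlim : ∀ δ ∈ C, Order.IsSuccLimit δ)
    (hd : ∀ δ ∈ C, IsNonprincipalOn (Ico δ (nextIn C δ)) (d δ)) :
    QZero lam where
  C := C
  d δ := if δ ∈ C then d δ else ∅
  club := hC
  limit := hlim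
  ultra δ hδ := by simpa only [if_pos hδ] using hd δ hδ
  d_junk δ hδ := if_neg hδ

theorem ofClub_d {C : Set Ordinal} {d : Ordinal → Set (Set Ordinal)} {hC : IsClubIn C lam} {hlim}
    {hd} {δ : Ordinal} (hδ : δ ∈ C) : (ofClub C d hC hlim hd).d δ = d δ :=
  if_pos hδ

end QZero

section UniformBound

variable {κ : Cardinal.{0}} {p q : QZero κ.ord}

/-- Otherwise pick, for unboundedly many `γ`, a `p`-large `W γ` failing at a block `b γ > γ` of
`q`; along a club these `q`-blocks are so far apart that no block of `p` meets two of them, so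
the `W γ` glue into one `p`-large set that fails in `q` at unboundedly many blocks. -/
theorem exists_uniform_largeFrom (hκ : κ.IsRegular) (hunc : ℵ₀ < κ) (hpq : le0 p q) :
    ∃ ε < κ.ord, ∀ A, p.LargeFrom 0 A → q.LargeFrom ε A := by
  by_contra! hbad
  have hlim := isSuccLimit_ord hκ.aleph0_le
  have hchoice : ∀ γ < κ.ord, ∃ W, p.LargeFrom 0 W ∧ ∃ β ∈ q.C, γ < β ∧ W ∩ q.Z β ∉ q.d β := by
    intro γ hγ
    obtain ⟨W, hW, hWq⟩ := hbad (Order.succ γ) (hlim.succ_lt hγ)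
    simp only [QZero.LargeFrom, not_forall] at hWq
    obtain ⟨β, hβ, hγβ, hWβ⟩ := hWq
    exact ⟨W, hW, β, hβ, Order.succ_le_iff.1 hγβ, hWβ⟩
  choose! W hW b hb hγb hWb using hchoice
  set m : Ordinal → Ordinal := fun γ => nextIn p.C (nextIn q.C (b γ))
  have hm : ∀ γ < κ.ord, m γ < κ.ord := fun γ hγ =>
    p.club.nextIn_lt (q.club.nextIn_lt (q.club.1 (hb γ hγ)))
  set D := closurePoints (fun _ γ => m γ) κ.ord
  have hsep : ∀ η, ∀ γ ∈ D, ∀ γ' ∈ D, γ < γ' → (p.Z η ∩ q.Z (b γ)).Nonempty →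
      ∀ y ∈ p.Z η, y ∉ q.Z (b γ') := by
    intro η γ hγ γ' hγ' hγγ' hmeet y hy hy'
    have := (hy.2.trans_le (QZero.nextIn_le_of_meets (hb γ hγ.1) hmeet)).trans
      ((hγ'.2.2 γ hγγ' γ hγγ').trans (hγb γ' hγ'.1))
    exact this.not_ge hy'.1
  set A := {x | x < κ.ord ∧ ∀ γ ∈ D, x ∈ q.Z (b γ) → x ∈ W γ}
  have hA : A ∈ fil p := by
    refine ⟨fun x hx => hx.1, 0, hκ.ord_pos, fun η hη _ => ?_⟩
    have hd := (p.ultra η hη).1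
    by_cases hmeet : ∃ γ ∈ D, (p.Z η ∩ q.Z (b γ)).Nonempty
    · obtain ⟨γ, hγ, y, hyp, hyq⟩ := hmeet
      refine hd.inter_mem_of_subset (hW γ hγ.1 η hη zero_le) fun x hx => ⟨p.Z_subset_Iio hη hx.2,
        fun γ' hγ' hxγ' => ?_⟩
      rcases lt_trichotomy γ γ' with h | rfl | h
      · exact absurd hxγ' (hsep η γ hγ γ' hγ' h ⟨y, hyp, hyq⟩ x hx.2)
      · exact hx.1
      · exact absurd hyq (hsep η γ' hγ' γ hγ h ⟨x, hx.2, hxγ'⟩ y hyp)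
    · exact hd.inter_mem_of_subset (p.Z_mem_d hη) fun x hx => ⟨p.Z_subset_Iio hη hx,
        fun γ hγ hxγ => absurd ⟨γ, hγ, x, hx, hxγ⟩ hmeet⟩
  obtain ⟨-, ε, hε, hAq⟩ := hpq hA
  obtain ⟨γ, hγ, hεγ⟩ := exists_mem_closurePoints_gt hκ hunc (fun _ _ γ hγ => hm γ hγ) hε
  exact hWb γ hγ.1 ((q.ultra _ (hb γ hγ.1)).1.inter_mem_of_subset
    (hAq _ (hb γ hγ.1) (hεγ.trans (hγb γ hγ.1)).le) fun x hx => hx.1.2 γ hγ hx.2)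

end UniformBound

section Chains

variable {κ : Cardinal.{0}} {lam α ξ ζ δ : Ordinal} {A B : Set Ordinal}

/-- The least threshold as in `exists_uniform_largeFrom`, or `0` if there is none below `lam`. -/
def uniformBound (p q : QZero lam) : Ordinal :=
  sInf {ε | ε < lam ∧ ∀ A, p.LargeFrom 0 A → q.LargeFrom ε A}

theorem uniformBound_lt {p q : QZero lam} (hlam : 0 < lam) : uniformBound p q < lam := by
  rcases eq_empty_or_nonempty {ε | ε < lam ∧ ∀ A, p.LargeFrom 0 A → q.LargeFrom ε A} with h | h
  · rwa [uniformBound, h, Ordinal.sInf_empty]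
  · exact (csInf_mem h).1

theorem largeFrom_uniformBound (hκ : κ.IsRegular) (hunc : ℵ₀ < κ) {p q : QZero κ.ord}
    (hpq : le0 p q) (hA : p.LargeFrom 0 A) : q.LargeFrom (uniformBound p q) A := by
  obtain ⟨ε, hε, h⟩ := exists_uniform_largeFrom hκ hunc hpq
  exact (csInf_mem (s := {ε | ε < κ.ord ∧ ∀ A, p.LargeFrom 0 A → q.LargeFrom ε A})
    ⟨ε, hε, h⟩).2 A hA

def chainClosure (p : Ordinal → QZero lam) (ξ β : Ordinal) : Ordinal :=
  max (nextIn (p ξ).C β) (uniformBound (p ξ) (p β))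

def chainLarge (p : Ordinal → QZero lam) (δ α : Ordinal) : Set (Set Ordinal) :=
  {B | ∃ ζ < δ, ζ < α ∧ (p ζ).LargeFrom 0 B}

theorem infinite_Ico_of_isSuccLimit {a b : Ordinal} (hb : Order.IsSuccLimit b) (hab : a < b) :
    (Ico a b).Infinite := by
  have hmem : ∀ n : ℕ, a + n ∈ Ico a b := by
    intro n
    induction n with
    | zero => simpa using hab
    | succ n ih => exact ⟨le_self_add, by simpa [add_assoc] using hb.succ_lt ih.2⟩
  exact infinite_of_injective_forall_mem (fun m n h => by exact_mod_cast (add_right_inj a).1 h) hmem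

variable {p : Ordinal → QZero κ.ord}

theorem chainClosure_lt (hκ : κ.IsRegular) {β : Ordinal} (hβ : β < κ.ord) :
    chainClosure p ξ β < κ.ord :=
  max_lt ((p ξ).club.nextIn_lt hβ) (uniformBound_lt hκ.ord_pos)

theorem isClubIn_closurePoints_chainClosure (hκ : κ.IsRegular) (hunc : ℵ₀ < κ) :
    IsClubIn (closurePoints (chainClosure p) κ.ord) κ.ord :=
  isClubIn_closurePoints hκ hunc fun _ _ _ hβ => chainClosure_lt hκ hβ

theorem mem_C_of_mem_closurePoints (hα : α ∈ closurePoints (chainClosure p) κ.ord)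
    (hξ : ξ < α) : α ∈ (p ξ).C :=
  (p ξ).club.mem_of_forall_nextIn_lt hα.1 (pos_of_gt hξ).ne' fun β hβ =>
    (le_max_left _ _).trans_lt (hα.2.2 ξ hξ β hβ)

theorem Z_subset_Ico_nextIn (hκ : κ.IsRegular) (hunc : ℵ₀ < κ)
    (hα : α ∈ closurePoints (chainClosure p) κ.ord) (hξ : ξ < α) :
    (p ξ).Z α ⊆ Ico α (nextIn (closurePoints (chainClosure p) κ.ord) α) := by
  have hC := isClubIn_closurePoints_chainClosure (p := p) hκ hunc
  have hn := hC.lt_nextIn hα.1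
  refine fun x hx => ⟨hx.1, hx.2.trans ((le_max_left _ (uniformBound (p ξ) (p α))).trans_lt ?_)⟩
  exact (hC.nextIn_mem hα.1).2.2 ξ (hξ.trans hn) α hn

theorem inter_Z_mem_of_mem_closurePoints (hκ : κ.IsRegular) (hunc : ℵ₀ < κ)
    (hmono : ∀ ξ ζ : Ordinal, ξ ≤ ζ → ζ < δ → le0 (p ξ) (p ζ))
    (hα : α ∈ closurePoints (chainClosure p) κ.ord) (hζξ : ζ ≤ ξ) (hξδ : ξ < δ) (hξα : ξ < α)
    (hB : (p ζ).LargeFrom 0 B) : B ∩ (p ξ).Z α ∈ (p ξ).d α :=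
  largeFrom_uniformBound hκ hunc (hmono ζ ξ hζξ hξδ) hB α (mem_C_of_mem_closurePoints hα hξα)
    ((le_max_right _ _).trans (hα.2.2 ζ (hζξ.trans_lt hξα) ξ hξα).le)

/-- Finitely many members of `chainLarge p δ α` are all large in the block at `α` of the
latest `p ζ` among them, hence meet in an infinite set. -/
theorem infinite_Ico_inter_sInter (hκ : κ.IsRegular) (hunc : ℵ₀ < κ)
    (hmono : ∀ ξ ζ : Ordinal, ξ ≤ ζ → ζ < δ → le0 (p ξ) (p ζ))
    (hα : α ∈ closurePoints (chainClosure p) κ.ord) {T : Set (Set Ordinal)} (hT : T.Finite)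
    (hTG : T ⊆ chainLarge p δ α) :
    (Ico α (nextIn (closurePoints (chainClosure p) κ.ord) α) ∩ ⋂₀ T).Infinite := by
  have hC := isClubIn_closurePoints_chainClosure (p := p) hκ hunc
  rcases T.eq_empty_or_nonempty with rfl | hTne
  · simpa using infinite_Ico_of_isSuccLimit (hC.nextIn_mem hα.1).2.1 (hC.lt_nextIn hα.1)
  have hTG' : ∀ B ∈ T, ∃ ζ < δ, ζ < α ∧ (p ζ).LargeFrom 0 B := fun B hB => hTG hB
  choose! ζ hζδ hζα hζB using hTG'
  obtain ⟨Bm, hBm, hmax⟩ := exists_max_image T ζ hT hTne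
  have hd := (p (ζ Bm)).ultra α (mem_C_of_mem_closurePoints hα (hζα Bm hBm))
  have hmem := hd.1.sInter_inter_mem hT fun B hB =>
    inter_Z_mem_of_mem_closurePoints hκ hunc hmono hα (hmax B hB) (hζδ Bm hBm) (hζα Bm hBm)
      (hζB B hB)
  exact (hd.infinite_of_mem hmem).mono fun x hx =>
    ⟨Z_subset_Ico_nextIn hκ hunc hα (hζα Bm hBm) hx.2, hx.1⟩

theorem exists_le0_upper_bound (hκ : κ.IsRegular) (hunc : ℵ₀ < κ) (hδ : δ ≤ κ.ord)
    (hmono : ∀ ξ ζ : Ordinal, ξ ≤ ζ → ζ < δ → le0 (p ξ) (p ζ)) :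
    ∃ r : QZero κ.ord, ∀ ξ < δ, le0 (p ξ) r := by
  set C := closurePoints (chainClosure p) κ.ord
  have hd : ∀ α ∈ C, ∃ d, IsNonprincipalOn (Ico α (nextIn C α)) d ∧
      ∀ B ∈ chainLarge p δ α, B ∩ Ico α (nextIn C α) ∈ d := fun α hα =>
    exists_isNonprincipalOn_of_finite_inter fun T hTG hT =>
      infinite_Ico_inter_sInter hκ hunc hmono hα hT hTG
  choose! d hd hdG using hd
  refine ⟨QZero.ofClub C d (isClubIn_closurePoints_chainClosure hκ hunc) (fun α hα => hα.2.1) hd,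
    fun ξ hξ A ⟨hA, ε, hε, hAε⟩ => ⟨hA, Order.succ (max ε ξ),
      (isSuccLimit_ord hκ.aleph0_le).succ_lt (max_lt hε (hξ.trans_le hδ)), fun α hα hεα => ?_⟩⟩
  replace hα : α ∈ C := hα
  have hlt : max ε ξ < α := Order.succ_le_iff.1 hεα
  have hξα : ξ < α := (le_max_right _ _).trans_lt hlt
  have hAα : A ∪ Iio α ∈ chainLarge p δ α := ⟨ξ, hξ, hξα,
    QZero.largeFrom_zero_union_Iio (mem_C_of_mem_closurePoints hα hξα)
      (QZero.LargeFrom.mono (p := p ξ) hAε ((le_max_left _ _).trans hlt.le))⟩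
  show A ∩ Ico α (nextIn C α) ∈ (QZero.ofClub C d _ _ hd).d α
  rw [QZero.ofClub_d hα]
  exact (hd α hα).1.inter_mem_of_subset (hdG α hα _ hAα) fun x hx =>
    hx.1.resolve_right (not_lt.2 hx.2.1)

end Chains

section Cardinality

variable {κ : Cardinal.{0}} {lam : Ordinal}

theorem powerlt_two_eq_self (hunc : ℵ₀ < κ) (hpow : κ ^< κ = κ) : 2 ^< κ = κ := by
  have h2κ : (2 : Cardinal) ≤ κ := (natCast_lt_aleph0 (n := 2)).le.trans hunc.le
  refine le_antisymm (powerlt_le.2 fun x hx => ?_) ?_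
  · exact (power_le_power_right h2κ).trans ((le_powerlt κ hx).trans hpow.le)
  · by_contra! h
    exact (cantor _).not_ge (le_powerlt 2 h)

theorem QZero.C_eq (p : QZero lam) : p.C = {δ | (p.d δ).Nonempty} :=
  Set.ext fun δ => ⟨fun h => ⟨_, p.Z_mem_d h⟩, fun ⟨A, hA⟩ =>
    by_contra fun h => by rw [p.d_junk δ h] at hA; exact hA⟩

theorem QZero.d_injective : Function.Injective (QZero.d : QZero lam → _) := by
  intro p q h
  have hC : p.C = q.C := by rw [p.C_eq, q.C_eq, h]
  cases p
  cases q
  simp only at hC h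
  subst hC h
  rfl

theorem mk_powerset_powerset_Iio_le (h2 : 2 ^< κ = κ) {γ : Ordinal} (hγ : γ < κ.ord) :
    #(𝒫 𝒫 Iio γ) ≤ lift (2 ^ κ) := by
  rw [mk_powerset, mk_powerset, Cardinal.mk_Iio_ordinal, lift_power, lift_two]
  refine power_le_power_left two_ne_zero ?_
  rw [← lift_two.{1, 0}, ← lift_power, lift_le, ← h2]
  exact le_powerlt 2 (lt_ord.1 hγ)

theorem mk_QZero_le (hκ : κ.IsRegular) (hunc : ℵ₀ < κ) (hpow : κ ^< κ = κ) :
    #(QZero κ.ord) ≤ lift (2 ^ κ) := by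
  set 𝒟 : Set (Set (Set Ordinal)) := ⋃ γ : Iio κ.ord, 𝒫 𝒫 Iio γ.1
  have hmem : ∀ (p : QZero κ.ord) δ, p.d δ ∈ 𝒟 := by
    intro p δ
    by_cases hδ : δ ∈ p.C
    · exact mem_iUnion.2 ⟨⟨_, p.club.nextIn_lt (p.club.1 hδ)⟩,
        fun A hA x hx => ((p.ultra δ hδ).1.subset_of_mem hA hx).2⟩
    · rw [p.d_junk δ hδ]
      exact mem_iUnion.2 ⟨⟨0, hκ.ord_pos⟩, empty_subset _⟩
  have hinj : Function.Injective
      fun (p : QZero κ.ord) (δ : Iio κ.ord) => (⟨p.d δ, hmem p δ⟩ : 𝒟) := by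
    intro p q h
    refine QZero.d_injective (funext fun δ => ?_)
    by_cases hδ : δ < κ.ord
    · exact congrArg Subtype.val (congrFun h ⟨δ, hδ⟩)
    · rw [p.d_junk δ fun h => hδ (p.club.1 h), q.d_junk δ fun h => hδ (q.club.1 h)]
  have h𝒟 : #𝒟 ≤ lift (2 ^ κ) := by
    refine (mk_iUnion_le _).trans ?_
    rw [Cardinal.mk_Iio_ordinal, card_ord]
    refine (mul_le_mul' le_rfl (ciSup_le' fun γ =>
      mk_powerset_powerset_Iio_le (powerlt_two_eq_self hunc hpow) γ.2)).trans ?_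
    rw [← lift_mul, lift_le,
      mul_eq_right (hκ.aleph0_le.trans (cantor κ).le) (cantor κ).le hκ.pos.ne']
  calc #(QZero κ.ord) ≤ #(Iio κ.ord → 𝒟) := mk_le_of_injective hinj
    _ = #𝒟 ^ lift κ := by rw [← power_def, Cardinal.mk_Iio_ordinal, card_ord]
    _ ≤ lift (2 ^ κ) ^ lift κ := power_le_power_right h𝒟
    _ = lift (2 ^ κ) := by rw [← lift_power, ← power_mul, mul_eq_self hκ.aleph0_le]

theorem lift_le_mk_of_isClubIn (hκ : κ.IsRegular) {C : Set Ordinal} (hC : IsClubIn C κ.ord) :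
    lift κ ≤ #C := by
  have hcof : IsCofinal {x : Iio κ.ord | x.1 ∈ C} := fun x =>
    let ⟨δ, hδ, hxδ⟩ := hC.2.1 x.1 x.2
    ⟨⟨δ, hC.1 hδ⟩, hδ, hxδ.le⟩
  calc lift κ = Order.cof (Iio κ.ord) := by rw [Ordinal.cof_Iio, ← Ordinal.lift_cof, hκ.cof_ord]
    _ ≤ #{x : Iio κ.ord | x.1 ∈ C} := Order.cof_le hcof
    _ ≤ #C := mk_le_of_injective (f := fun x => ⟨x.1.1, x.2⟩)
        fun x y h => Subtype.ext (Subtype.ext (Subtype.mk.inj h))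

theorem lift_two_power_le_mk_QZero (hκ : κ.IsRegular) (hunc : ℵ₀ < κ) :
    lift (2 ^ κ) ≤ #(QZero κ.ord) := by
  classical
  set C := closurePoints (fun _ _ => 0) κ.ord
  have hC : IsClubIn C κ.ord := isClubIn_closurePoints hκ hunc fun _ _ _ _ => hκ.ord_pos
  have hne : ∀ δ ∈ C, ∃ d₁ d₂, IsNonprincipalOn (Ico δ (nextIn C δ)) d₁ ∧
      IsNonprincipalOn (Ico δ (nextIn C δ)) d₂ ∧ d₁ ≠ d₂ := fun δ hδ =>
    exists_ne_isNonprincipalOn (infinite_Ico_of_isSuccLimit (hC.nextIn_mem hδ.1).2.1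
      (hC.lt_nextIn hδ.1))
  choose! d₁ d₂ hd₁ hd₂ hne using hne
  let r : 𝒫 C → QZero κ.ord := fun S => QZero.ofClub C (fun δ => if δ ∈ S.1 then d₁ δ else d₂ δ)
    hC (fun δ hδ => hδ.2.1) fun δ hδ => by split_ifs; exacts [hd₁ δ hδ, hd₂ δ hδ]
  have hr : Function.Injective r := by
    intro S T h
    refine Subtype.ext (Set.ext fun δ => ?_)
    by_cases hδ : δ ∈ C
    · have hST := congrArg (fun q => q.d δ) h
      simp only [r, QZero.ofClub_d hδ] at hST
      split_ifs at hST with hS hT hT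
      · exact iff_of_true hS hT
      · exact absurd hST (hne δ hδ)
      · exact absurd hST.symm (hne δ hδ)
      · exact iff_of_false hS hT
    · exact iff_of_false (fun h => hδ (S.2 h)) fun h => hδ (T.2 h)
  calc lift (2 ^ κ) = 2 ^ lift κ := by rw [lift_power, lift_two]
    _ ≤ 2 ^ #C := power_le_power_left two_ne_zero (lift_le_mk_of_isClubIn hκ hC)
    _ = #(𝒫 C) := (mk_powerset C).symm
    _ ≤ #(QZero κ.ord) := mk_le_of_injective hr

end Cardinality

/-- `Q⁰_λ` ordered by `≤⁰` is a `(<λ⁺)`-complete forcing notion: every `≤⁰`-increasing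
sequence of length `≤ λ` has a `≤⁰`-upper bound; moreover `|Q⁰_λ| = 2^(2^(<λ))`. -/
theorem statement16 (κ : Cardinal.{0}) (hreg : κ.IsRegular) (hunc : Cardinal.aleph0 < κ)
    (hpow : κ ^< κ = κ) :
    (∀ δ : Ordinal, δ ≤ κ.ord → ∀ p : Ordinal → QZero κ.ord,
      (∀ ξ ζ : Ordinal, ξ ≤ ζ → ζ < δ → le0 (p ξ) (p ζ)) →
      ∃ r : QZero κ.ord, ∀ ξ < δ, le0 (p ξ) r) ∧
    Cardinal.mk (QZero κ.ord) = Cardinal.lift.{1,0} (2 ^ ((2 : Cardinal) ^< κ)) := by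
  refine ⟨fun δ hδ p hmono => exists_le0_upper_bound hreg hunc hδ hmono, ?_⟩
  rw [powerlt_two_eq_self hunc hpow]
  exact le_antisymm (mk_QZero_le hreg hunc hpow) (lift_two_power_le_mk_QZero hreg hunc)
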